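/- Let P be a poset and X a coherent finite cutset of P. Then the opposite of the crosscut poset Γ(P,X) is isomorphic to a strong deformation retract of the poset of simplices of the crosscut complex Γ_C(P,X); concretely, the maps ν(σ) = st(σ) and ι(C) = I_X(C) satisfy ν∘ι = id on Γ(P,X)^op and ι∘ν ≥ id on the simplex poset of Γ_C(P,X). -/

import Mathlib

/-- The star of an element: all elements comparable to `a`. -/
def starOf {α : Type*} [PartialOrder α] (a : α) : Set α := {x | x ≤ a ∨ a ≤ x}

/-- The star of a subset: elements comparable to every element of `A`. -/
def starSetOf {α : Type*} [PartialOrder α] (A : Set α) : Set α := ⋂ a ∈ A, starOf a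

/-- A subset is astral if it is contained in the star of some element. -/
def IsAstral {α : Type*} [PartialOrder α] (A : Set α) : Prop := ∃ x : α, A ⊆ starOf x

/-- One step of the comparability relation inside a subposet `S`. -/
def CompStep {α : Type*} [PartialOrder α] (S : Set α) (x y : α) : Prop :=
  x ∈ S ∧ y ∈ S ∧ (x ≤ y ∨ y ≤ x)

/-- `x` and `y` are connected inside the subposet `S`. -/
def ConnIn {α : Type*} [PartialOrder α] (S : Set α) (x y : α) : Prop :=
  Relation.ReflTransGen (CompStep S) x y

/-- A subposet is connected (as a subposet, via comparability). -/
def IsConnSub {α : Type*} [PartialOrder α] (S : Set α) : Prop :=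
  S.Nonempty ∧ ∀ x ∈ S, ∀ y ∈ S, ConnIn S x y

/-- The connected component of `x` in the subposet `S`. -/
def compOf {α : Type*} [PartialOrder α] (S : Set α) (x : α) : Set α :=
  {y | y ∈ S ∧ ConnIn S x y}

/-- `C` is a connected component of the subposet `S`. -/
def IsCompOf {α : Type*} [PartialOrder α] (S C : Set α) : Prop :=
  ∃ x ∈ S, C = compOf S x

/-- The crosscut poset `Γ(P,X)`: connected components of the nonempty `st(A)`, `∅ ≠ A ⊆ X`. -/
def crosscutPoset {α : Type*} [PartialOrder α] (X : Set α) : Set (Set α) :=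
  {C | ∃ A : Set α, A.Nonempty ∧ A ⊆ X ∧ IsCompOf (starSetOf A) C}

/-- The subposet `Γ_f(P,X)` coming from finite subsets `A ⊆ X`. -/
def crosscutPosetF {α : Type*} [PartialOrder α] (X : Set α) : Set (Set α) :=
  {C | ∃ A : Set α, A.Nonempty ∧ A.Finite ∧ A ⊆ X ∧ IsCompOf (starSetOf A) C}

/-- `X` is a cutset: every finite chain extends to a chain by an element of `X`. -/
def IsCutset {α : Type*} [PartialOrder α] (X : Set α) : Prop :=
  ∀ σ : Set α, σ.Finite → IsChain (· ≤ ·) σ → ∃ a ∈ X, IsChain (· ≤ ·) (insert a σ)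

/-- A subset `X` is coherent: every finite nonempty bounded subset of `X` has a meet or a join. -/
def IsCoherent {α : Type*} [PartialOrder α] (X : Set α) : Prop :=
  ∀ A ⊆ X, A.Finite → A.Nonempty → (BddAbove A ∨ BddBelow A) →
    (∃ z, IsGLB A z) ∨ (∃ z, IsLUB A z)

/-- The simplices of the crosscut complex `Γ_C(P,X)`: nonempty finite astral subsets of `X`. -/
def IsCCSimplex {α : Type*} [PartialOrder α] (X σ : Set α) : Prop :=
  σ ⊆ X ∧ σ.Finite ∧ σ.Nonempty ∧ IsAstral σ

/-- `I_X(D) = {x ∈ X | D ⊆ st(x)}`. -/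
def astralIdx {α : Type*} [PartialOrder α] (X D : Set α) : Set α :=
  {x ∈ X | D ⊆ starOf x}

/-- The set of maximal elements of a poset. -/
def mxlSet (α : Type*) [PartialOrder α] : Set α := {a | ∀ b, a ≤ b → b = a}

/-- The set of minimal elements of a poset. -/
def mnlSet (α : Type*) [PartialOrder α] : Set α := {a | ∀ b, b ≤ a → b = a}

/-- Type synonym carrying the Alexandroff topology (down-sets are open) of a preorder. -/
def AlexSp (β : Type*) := β

instance {β : Type*} [Preorder β] : Preorder (AlexSp β) := inferInstanceAs (Preorder β)
instance {β : Type*} [PartialOrder β] : PartialOrder (AlexSp β) :=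
  inferInstanceAs (PartialOrder β)

instance {β : Type*} [Preorder β] : TopologicalSpace (AlexSp β) where
  IsOpen U := IsLowerSet U
  isOpen_univ := isLowerSet_univ
  isOpen_inter _ _ h₁ h₂ := h₁.inter h₂
  isOpen_sUnion _ h := isLowerSet_sUnion h

/-!
Coherence makes `st(σ)` connected for every finite nonempty `σ ⊆ X`: two incomparable points
`y, z ∈ st(σ)` lie on the same side of each `a ∈ σ`, so a meet or join of the elements of `σ`
above `y` (or of those below `y`) is comparable to both and still lies in `st(σ)`. Hence `st(σ)`
is its own component, and a component `C` of `st(A)` equals `st(I_X(C))`, because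
`C ⊆ st(I_X(C)) ⊆ st(A)` and `st(I_X(C))` is connected.
-/

section Star

variable {α : Type*} [PartialOrder α]

lemma mem_starSetOf {A : Set α} {y : α} : y ∈ starSetOf A ↔ ∀ a ∈ A, y ≤ a ∨ a ≤ y := by
  simp [starSetOf, starOf]

lemma starSetOf_anti {A B : Set α} (h : A ⊆ B) : starSetOf B ⊆ starSetOf A :=
  fun _ hy => mem_starSetOf.2 fun a ha => mem_starSetOf.1 hy a (h ha)

lemma starSetOf_toDual (A : Set α) :
    starSetOf (OrderDual.ofDual ⁻¹' A) = OrderDual.ofDual ⁻¹' starSetOf A := by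
  ext y
  simp only [Set.mem_preimage, mem_starSetOf]
  exact forall₂_congr fun _ _ => or_comm

lemma IsCoherent.dual {X : Set α} (hX : IsCoherent X) : IsCoherent (OrderDual.ofDual ⁻¹' X) :=
  fun A hA hfin hne hbdd => (hX (OrderDual.toDual ⁻¹' A) hA hfin hne hbdd.symm).symm

end Star

section Connectivity

variable {α : Type*} [PartialOrder α] {X σ : Set α}

lemma connIn_of_comparable {S : Set α} {x y : α} (hx : x ∈ S) (hy : y ∈ S)
    (h : x ≤ y ∨ y ≤ x) : ConnIn S x y :=
  Relation.ReflTransGen.single ⟨hx, hy, h⟩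

lemma ConnIn.mono {S T : Set α} (h : S ⊆ T) {x y : α} (hc : ConnIn S x y) : ConnIn T x y :=
  Relation.ReflTransGen.mono (fun _ _ hs => ⟨h hs.1, h hs.2.1, hs.2.2⟩) _ _ hc

/-- Either bound of `U = {a ∈ σ | y ≤ a}` given by coherence lies above `y` and `z` and in `st(σ)`. -/
lemma exists_ge_mem_starSetOf (hcoh : IsCoherent X) (hσX : σ ⊆ X) (hσ : σ.Finite) {y z : α}
    (hy : y ∈ starSetOf σ) (hzU : ∀ a ∈ σ, y ≤ a → z ≤ a) (hU : ∃ a ∈ σ, y ≤ a) :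
    ∃ w ∈ starSetOf σ, y ≤ w ∧ z ≤ w := by
  set U := {a ∈ σ | y ≤ a}
  obtain ⟨b, hb⟩ : U.Nonempty := hU
  have below_y : ∀ a ∈ σ, a ∉ U → a ≤ y := fun a ha haU =>
    (mem_starSetOf.1 hy a ha).resolve_left fun h => haU ⟨ha, h⟩
  rcases hcoh U (fun a ha => hσX ha.1) (hσ.subset fun a ha => ha.1) ⟨b, hb⟩
      (Or.inr ⟨y, fun a ha => ha.2⟩) with ⟨g, hg⟩ | ⟨s, hs⟩
  · have hyg : y ≤ g := hg.2 fun a ha => ha.2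
    refine ⟨g, mem_starSetOf.2 fun a ha => ?_, hyg, hg.2 fun a ha => hzU a ha.1 ha.2⟩
    by_cases haU : a ∈ U
    · exact Or.inl (hg.1 haU)
    · exact Or.inr ((below_y a ha haU).trans hyg)
  · have hys : y ≤ s := hb.2.trans (hs.1 hb)
    refine ⟨s, mem_starSetOf.2 fun a ha => Or.inr ?_, hys, (hzU b hb.1 hb.2).trans (hs.1 hb)⟩
    by_cases haU : a ∈ U
    · exact hs.1 haU
    · exact (below_y a ha haU).trans hys

lemma exists_le_mem_starSetOf (hcoh : IsCoherent X) (hσX : σ ⊆ X) (hσ : σ.Finite) {y z : α}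
    (hy : y ∈ starSetOf σ) (hzD : ∀ a ∈ σ, a ≤ y → a ≤ z) (hD : ∃ a ∈ σ, a ≤ y) :
    ∃ w ∈ starSetOf σ, w ≤ y ∧ w ≤ z := by
  have hy' : OrderDual.toDual y ∈ starSetOf (OrderDual.ofDual ⁻¹' σ) := by rwa [starSetOf_toDual]
  obtain ⟨w, hw, hyw, hzw⟩ := exists_ge_mem_starSetOf (X := OrderDual.ofDual ⁻¹' X)
    (σ := OrderDual.ofDual ⁻¹' σ) (z := OrderDual.toDual z)
    hcoh.dual hσX hσ hy' hzD hD
  rw [starSetOf_toDual, Set.mem_preimage] at hw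
  exact ⟨OrderDual.ofDual w, hw, hyw, hzw⟩

lemma exists_mem_starSetOf_comparable_both (hcoh : IsCoherent X) (hσX : σ ⊆ X)
    (hσ : σ.Finite) (hne : σ.Nonempty) {y z : α} (hy : y ∈ starSetOf σ)
    (hz : z ∈ starSetOf σ) :
    ∃ w ∈ starSetOf σ, (y ≤ w ∨ w ≤ y) ∧ (z ≤ w ∨ w ≤ z) := by
  by_cases hyz : y ≤ z ∨ z ≤ y
  · exact ⟨y, hy, Or.inl le_rfl, hyz.symm⟩
  push Not at hyz
  obtain ⟨a₀, ha₀⟩ := hne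
  rcases mem_starSetOf.1 hy a₀ ha₀ with hya₀ | ha₀y
  · have hzU : ∀ a ∈ σ, y ≤ a → z ≤ a := fun a ha hya =>
      (mem_starSetOf.1 hz a ha).resolve_right fun haz => hyz.1 (hya.trans haz)
    obtain ⟨w, hw, hyw, hzw⟩ := exists_ge_mem_starSetOf hcoh hσX hσ hy hzU ⟨a₀, ha₀, hya₀⟩
    exact ⟨w, hw, Or.inl hyw, Or.inl hzw⟩
  · have hzD : ∀ a ∈ σ, a ≤ y → a ≤ z := fun a ha hay =>
      (mem_starSetOf.1 hz a ha).resolve_left fun hza => hyz.2 (hza.trans hay)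
    obtain ⟨w, hw, hwy, hwz⟩ := exists_le_mem_starSetOf hcoh hσX hσ hy hzD ⟨a₀, ha₀, ha₀y⟩
    exact ⟨w, hw, Or.inr hwy, Or.inr hwz⟩

lemma connIn_starSetOf (hcoh : IsCoherent X) (hσX : σ ⊆ X) (hσ : σ.Finite)
    (hne : σ.Nonempty) {y z : α} (hy : y ∈ starSetOf σ) (hz : z ∈ starSetOf σ) :
    ConnIn (starSetOf σ) y z := by
  obtain ⟨w, hw, hyw, hzw⟩ := exists_mem_starSetOf_comparable_both hcoh hσX hσ hne hy hz
  exact (connIn_of_comparable hy hw hyw).trans (connIn_of_comparable hw hz hzw.symm)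

lemma compOf_starSetOf_eq (hcoh : IsCoherent X) (hσX : σ ⊆ X) (hσ : σ.Finite)
    (hne : σ.Nonempty) {x : α} (hx : x ∈ starSetOf σ) : compOf (starSetOf σ) x = starSetOf σ :=
  Set.Subset.antisymm (fun _ hy => hy.1) fun _ hy => ⟨hy, connIn_starSetOf hcoh hσX hσ hne hx hy⟩

end Connectivity

section CrosscutMaps

variable {α : Type*} [PartialOrder α] {X σ : Set α}

lemma starSetOf_mem_crosscutPoset (hcoh : IsCoherent X) (hσ : IsCCSimplex X σ) :
    starSetOf σ ∈ crosscutPoset X := by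
  obtain ⟨hσX, hfin, hne, x, hx⟩ := hσ
  have hxσ : x ∈ starSetOf σ := mem_starSetOf.2 fun a ha => (hx ha).symm
  exact ⟨σ, hne, hσX, x, hxσ, (compOf_starSetOf_eq hcoh hσX hfin hne hxσ).symm⟩

lemma subset_astralIdx_starSetOf (hσX : σ ⊆ X) : σ ⊆ astralIdx X (starSetOf σ) :=
  fun a ha => ⟨hσX ha, fun _ hy => mem_starSetOf.1 hy a ha⟩

lemma subset_starSetOf_astralIdx (C : Set α) : C ⊆ starSetOf (astralIdx X C) :=
  fun _ hy => mem_starSetOf.2 fun _ hx => hx.2 hy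

lemma isCCSimplex_astralIdx (hXfin : X.Finite) {C : Set α} (hC : C ∈ crosscutPoset X) :
    IsCCSimplex X (astralIdx X C) := by
  obtain ⟨A, hAne, hAX, x₀, hx₀, rfl⟩ := hC
  have hAI : A ⊆ astralIdx X (compOf (starSetOf A) x₀) :=
    fun a ha => ⟨hAX ha, fun _ hy => mem_starSetOf.1 hy.1 a ha⟩
  exact ⟨fun _ hx => hx.1, hXfin.subset fun _ hx => hx.1, hAne.mono hAI,
    x₀, fun _ hx => (hx.2 ⟨hx₀, .refl⟩).symm⟩

lemma starSetOf_astralIdx (hXfin : X.Finite) (hcoh : IsCoherent X) {C : Set α}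
    (hC : C ∈ crosscutPoset X) : starSetOf (astralIdx X C) = C := by
  obtain ⟨hIX, hIfin, hIne, -⟩ := isCCSimplex_astralIdx hXfin hC
  obtain ⟨A, -, hAX, x₀, hx₀, rfl⟩ := hC
  have hx₀C : x₀ ∈ compOf (starSetOf A) x₀ := ⟨hx₀, .refl⟩
  have hsub : starSetOf (astralIdx X (compOf (starSetOf A) x₀)) ⊆ starSetOf A :=
    starSetOf_anti fun a ha => ⟨hAX ha, fun _ hy => mem_starSetOf.1 hy.1 a ha⟩
  refine Set.Subset.antisymm (fun y hy => ⟨hsub hy, ?_⟩) (subset_starSetOf_astralIdx _)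
  exact (connIn_starSetOf hcoh hIX hIfin hIne (subset_starSetOf_astralIdx _ hx₀C) hy).mono hsub

end CrosscutMaps

theorem stmt_9_general {α : Type*} [PartialOrder α] {X : Set α}
    (hXfin : X.Finite) (hcoh : IsCoherent X) :
    (∀ σ, IsCCSimplex X σ → starSetOf σ ∈ crosscutPoset X) ∧
      (∀ C ∈ crosscutPoset X, IsCCSimplex X (astralIdx X C) ∧ starSetOf (astralIdx X C) = C) ∧
      (∀ σ, IsCCSimplex X σ → σ ⊆ astralIdx X (starSetOf σ)) :=
  ⟨fun _ hσ => starSetOf_mem_crosscutPoset hcoh hσ,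
    fun _ hC => ⟨isCCSimplex_astralIdx hXfin hC, starSetOf_astralIdx hXfin hcoh hC⟩,
    fun _ hσ => subset_astralIdx_starSetOf hσ.1⟩

/-- For a coherent finite cutset `X`, the maps `ν(σ) = st(σ)` and `ι(C) = I_X(C)` exhibit
`Γ(P,X)ᵒᵖ` as (isomorphic to) a strong deformation retract of the simplex poset of
`Γ_C(P,X)`: `ν` and `ι` are well defined, `ν ∘ ι = id` and `ι ∘ ν ≥ id`. -/
theorem stmt_9 {α : Type*} [PartialOrder α] {X : Set α}
    (hXfin : X.Finite) (hcut : IsCutset X) (hcoh : IsCoherent X) :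
    (∀ σ, IsCCSimplex X σ → starSetOf σ ∈ crosscutPoset X) ∧
      (∀ C ∈ crosscutPoset X, IsCCSimplex X (astralIdx X C) ∧ starSetOf (astralIdx X C) = C) ∧
      (∀ σ, IsCCSimplex X σ → σ ⊆ astralIdx X (starSetOf σ)) :=
  stmt_9_general hXfin hcoh
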